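/- arXiv:2503.07558 — 5 statements merged into one kernel-verified Lean document; each statement's English description precedes it below -/
import Mathlib

section
/- Let d and n be positive natural numbers and let p_1, …, p_n be points in the Euclidean space ℝ^d. Then the map sending a point x to the vector of distances (dist(p_1, x), dist(p_2, x), …, dist(p_n, x)) ∈ ℝ^n is injective on the convex hull conv{p_1, …, p_n}; that is, if x and y both lie in conv{p_1, …, p_n} and dist(p_i, x) = dist(p_i, y) for every i = 1, …, n, then x = y. -/
open AffineSubspace

theorem eq_of_mem_convexHull_of_forall_dist_eq {E : Type*} [NormedAddCommGroup E]
    [InnerProductSpace ℝ E] {s : Set E} {x y : E} (hx : x ∈ convexHull ℝ s)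
    (h : ∀ p ∈ s, dist p x = dist p y) : x = y := by
  have hs : s ⊆ perpBisector x y := fun p hp => mem_perpBisector_iff_dist_eq.mpr (h p hp)
  exact left_mem_perpBisector.mp (convexHull_min hs (perpBisector x y).convex hx)

theorem distance_map_injective_on_convex_hull_general
    (d n : ℕ)
    (p : Fin n → EuclideanSpace ℝ (Fin d))
    (x y : EuclideanSpace ℝ (Fin d))
    (hx : x ∈ convexHull ℝ (Set.range p))
    (h : ∀ i : Fin n, dist (p i) x = dist (p i) y) :
    x = y :=
  eq_of_mem_convexHull_of_forall_dist_eq hx (Set.forall_mem_range.mpr h)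

/-- The map sending a point `x` in Euclidean space `ℝ^d` to the vector of distances
`(dist (p 1) x, …, dist (p n) x)` is injective on the convex hull of `{p 1, …, p n}`. -/
theorem distance_map_injective_on_convex_hull
    (d n : ℕ) (hd : 0 < d) (hn : 0 < n)
    (p : Fin n → EuclideanSpace ℝ (Fin d))
    (x y : EuclideanSpace ℝ (Fin d))
    (hx : x ∈ convexHull ℝ (Set.range p))
    (hy : y ∈ convexHull ℝ (Set.range p))
    (h : ∀ i : Fin n, dist (p i) x = dist (p i) y) :
    x = y :=
  distance_map_injective_on_convex_hull_general d n p x y hx h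
end

section
/- Let p_1, …, p_n be points in the Euclidean space ℝ^d and let x, x' ∈ conv{p_1, …, p_n}. If dist(p_i, x') ≥ dist(p_i, x) for every i = 1, …, n, then x' = x. -/
/-! The points at least as close to `x` as to `x'` form a closed half-space, because
`‖y - x‖² - ‖y - x'‖²` is affine in `y`. If every `p i` lies in it, so does their convex hull,
hence so does `x'`; then `dist x' x ≤ dist x' x' = 0`. -/

section

variable {E : Type*} [NormedAddCommGroup E] [InnerProductSpace ℝ E]

theorem dist_le_dist_iff_two_mul_inner_le {x x' y : E} :
    dist y x ≤ dist y x' ↔ 2 * inner ℝ (x' - x) y ≤ ‖x'‖ ^ 2 - ‖x‖ ^ 2 := by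
  rw [← sq_le_sq₀ dist_nonneg dist_nonneg, dist_eq_norm, dist_eq_norm, norm_sub_sq_real,
    norm_sub_sq_real, inner_sub_left, real_inner_comm x, real_inner_comm x']
  constructor <;> intro h <;> linarith

theorem convex_setOf_dist_le_dist (x x' : E) : Convex ℝ {y : E | dist y x ≤ dist y x'} := by
  simp_rw [dist_le_dist_iff_two_mul_inner_le]
  exact (convex_Iic (‖x'‖ ^ 2 - ‖x‖ ^ 2)).linear_preimage ((2 : ℝ) • innerₛₗ ℝ (x' - x))

theorem eq_of_mem_convexHull_of_dist_le_dist {s : Set E} {x x' : E}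
    (hx' : x' ∈ convexHull ℝ s) (h : ∀ p ∈ s, dist p x ≤ dist p x') : x' = x := by
  have hx'_closer : dist x' x ≤ dist x' x' :=
    convexHull_min h (convex_setOf_dist_le_dist x x') hx'
  rwa [dist_self, dist_le_zero] at hx'_closer

end

theorem eq_of_dist_ge_on_convex_hull_general
    (d n : ℕ) (p : Fin n → EuclideanSpace ℝ (Fin d))
    (x x' : EuclideanSpace ℝ (Fin d))
    (hx' : x' ∈ convexHull ℝ (Set.range p))
    (h : ∀ i : Fin n, dist (p i) x ≤ dist (p i) x') :
    x' = x :=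
  eq_of_mem_convexHull_of_dist_le_dist hx' (Set.forall_mem_range.2 h)

/-- If `x, x'` lie in the convex hull of `{p 1, …, p n}` in Euclidean space and
`dist (p i) x' ≥ dist (p i) x` for every `i`, then `x' = x`. -/
theorem eq_of_dist_ge_on_convex_hull
    (d n : ℕ) (p : Fin n → EuclideanSpace ℝ (Fin d))
    (x x' : EuclideanSpace ℝ (Fin d))
    (hx : x ∈ convexHull ℝ (Set.range p))
    (hx' : x' ∈ convexHull ℝ (Set.range p))
    (h : ∀ i : Fin n, dist (p i) x ≤ dist (p i) x') :
    x' = x :=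
  eq_of_dist_ge_on_convex_hull_general d n p x x' hx' h
end

section
/- Let p_1, …, p_n be points in the Euclidean space ℝ^d, let 𝒳 ⊆ ℝ^d, and for each x ∈ 𝒳 define the feasible-report set L_x = { y ∈ ℝ^n : y_i ≥ dist(p_i, x) for all i, and there exists x' ∈ 𝒳 with y_i = dist(p_i, x') for all i }. Suppose u ∈ ℝ^d is a unit vector with ⟨p_i, u⟩ ≥ 0 for every i, suppose β > α > 0 are reals, and suppose that the two distinct points x_1 = −α u and x_2 = −β u both belong to 𝒳. Then the vector (dist(p_1, x_2), …, dist(p_n, x_2)) ∈ ℝ^n belongs to L_{x_1} ∩ L_{x_2}; in particular L_{x_1} ∩ L_{x_2} ≠ ∅, so the source is not identifiable. -/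
open scoped RealInnerProductSpace

/-! Moving the source from `-α • u` further out to `-β • u` increases its distance to every
observer, because all observers lie in the half-space `⟪·, u⟫ ≥ 0`. So the honest report from
`x₂` is also an admissible enlarged report from `x₁`. -/

section

variable {E : Type*} [NormedAddCommGroup E] [InnerProductSpace ℝ E]

theorem norm_add_smul_le_norm_add_smul {p u : E} (hpu : 0 ≤ ⟪p, u⟫) {a b : ℝ}
    (ha : 0 ≤ a) (hab : a ≤ b) : ‖p + a • u‖ ≤ ‖p + b • u‖ := by
  have expand : ∀ t : ℝ, ‖p + t • u‖ ^ 2 = ‖p‖ ^ 2 + 2 * (t * ⟪p, u⟫) + t ^ 2 * ‖u‖ ^ 2 := by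
    intro t
    rw [norm_add_sq_real, real_inner_smul_right, norm_smul, mul_pow, Real.norm_eq_abs, sq_abs]
  refine (sq_le_sq₀ (norm_nonneg _) (norm_nonneg _)).1 ?_
  rw [expand, expand]
  have hsq : a ^ 2 ≤ b ^ 2 := pow_le_pow_left₀ ha hab 2
  nlinarith [sq_nonneg ‖u‖]

theorem dist_neg_smul_le_dist_neg_smul {p u : E} (hpu : 0 ≤ ⟪p, u⟫) {a b : ℝ}
    (ha : 0 ≤ a) (hab : a ≤ b) : dist p ((-a) • u) ≤ dist p ((-b) • u) := by
  simpa only [dist_eq_norm, neg_smul, sub_neg_eq_add] using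
    norm_add_smul_le_norm_add_smul hpu ha hab

end

theorem location_source_not_identifiable_outside_convexHull_general
    (d n : ℕ) (p : Fin n → EuclideanSpace ℝ (Fin d))
    (X : Set (EuclideanSpace ℝ (Fin d)))
    (L : EuclideanSpace ℝ (Fin d) → Set (Fin n → ℝ))
    (hL : ∀ x, L x = { y : Fin n → ℝ |
      (∀ i, dist (p i) x ≤ y i) ∧ ∃ x' ∈ X, ∀ i, y i = dist (p i) x' })
    (u : EuclideanSpace ℝ (Fin d))
    (hpu : ∀ i, 0 ≤ ⟪p i, u⟫)
    (α β : ℝ) (hα : 0 < α) (hαβ : α < β)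
    (x₁ x₂ : EuclideanSpace ℝ (Fin d))
    (hx₁def : x₁ = (-α) • u) (hx₂def : x₂ = (-β) • u)
    (hx₂ : x₂ ∈ X) :
    (fun i => dist (p i) x₂) ∈ L x₁ ∩ L x₂ ∧ (L x₁ ∩ L x₂).Nonempty := by
  have farther : ∀ i, dist (p i) x₁ ≤ dist (p i) x₂ := fun i => by
    rw [hx₁def, hx₂def]
    exact dist_neg_smul_le_dist_neg_smul (hpu i) hα.le hαβ.le
  have hmem : (fun i => dist (p i) x₂) ∈ L x₁ ∩ L x₂ := by
    rw [hL, hL]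
    exact ⟨⟨farther, x₂, hx₂, fun _ => rfl⟩, ⟨fun _ => le_rfl, x₂, hx₂, fun _ => rfl⟩⟩
  exact ⟨hmem, _, hmem⟩

/-- If `𝒳` contains two distinct points `x₁ = -α • u` and `x₂ = -β • u` (with `β > α > 0`)
on the far side of a separating hyperplane with unit normal `u` satisfying `⟪p i, u⟫ ≥ 0`
for all observers, then the vector of distances to `x₂` lies in `L x₁ ∩ L x₂`; in
particular `L x₁ ∩ L x₂ ≠ ∅`, so the source is not identifiable. -/
theorem location_source_not_identifiable_outside_convexHull
    (d n : ℕ) (p : Fin n → EuclideanSpace ℝ (Fin d))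
    (X : Set (EuclideanSpace ℝ (Fin d)))
    (L : EuclideanSpace ℝ (Fin d) → Set (Fin n → ℝ))
    (hL : ∀ x, L x = { y : Fin n → ℝ |
      (∀ i, dist (p i) x ≤ y i) ∧ ∃ x' ∈ X, ∀ i, y i = dist (p i) x' })
    (u : EuclideanSpace ℝ (Fin d)) (hu : ‖u‖ = 1)
    (hpu : ∀ i, 0 ≤ ⟪p i, u⟫)
    (α β : ℝ) (hα : 0 < α) (hαβ : α < β)
    (x₁ x₂ : EuclideanSpace ℝ (Fin d))
    (hx₁def : x₁ = (-α) • u) (hx₂def : x₂ = (-β) • u)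
    (hx₁ : x₁ ∈ X) (hx₂ : x₂ ∈ X) :
    (fun i => dist (p i) x₂) ∈ L x₁ ∩ L x₂ ∧ (L x₁ ∩ L x₂).Nonempty :=
  location_source_not_identifiable_outside_convexHull_general d n p X L hL u hpu α β hα hαβ x₁ x₂
    hx₁def hx₂def hx₂
end

section
/- Let Y be a nonempty finite type of signal values, let n ≥ 1, let 𝒳 be a type of source signals, and let L : 𝒳 → Set (probability mass functions on (Fin n → Y)) be a model specification that is NOT source-identifiable, i.e., there exist x_1 ≠ x_2 in 𝒳 and a probability mass function D with D ∈ L(x_1) ∩ L(x_2). Then there is no payoff function u assigning a real number u(x̂, D̂, y) to each reported source value x̂ ∈ 𝒳, reported distribution D̂, and realized signal profile y ∈ (Fin n → Y), such that truthful reporting is strictly optimal in expectation: that is, there is no u with the property that for every x ∈ 𝒳, every D' ∈ L(x), and every x' ∈ 𝒳 with x' ≠ x, the expected payoff Σ_y D'(y)·u(x, D', y) is strictly greater than Σ_y D'(y)·u(x', D', y). -/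
theorem no_strictly_truthful_mechanism_of_not_identifiable_general
    (Y : Type) [Fintype Y]
    (n : ℕ)
    (X : Type)
    (L : X → Set (PMF (Fin n → Y)))
    (hni : ∃ x₁ x₂ : X, x₁ ≠ x₂ ∧ (L x₁ ∩ L x₂).Nonempty) :
    ¬ ∃ u : X → PMF (Fin n → Y) → (Fin n → Y) → ℝ,
        ∀ x : X, ∀ D' ∈ L x, ∀ x' : X, x' ≠ x →
          ∑ y : Fin n → Y, (D' y).toReal * u x' D' y
            < ∑ y : Fin n → Y, (D' y).toReal * u x D' y := by
  rintro ⟨u, hu⟩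
  obtain ⟨x₁, x₂, hne, D, hD₁, hD₂⟩ := hni
  exact lt_asymm (hu x₁ D hD₁ x₂ hne.symm) (hu x₂ D hD₂ x₁ hne)

/-- Impossibility of strictly truthful elicitation when the source is not identifiable:
if there exist distinct source signals `x₁ ≠ x₂` whose feasible sets of signal
distributions `L x₁` and `L x₂` share a common distribution, then no payoff function
`u (x̂, D̂, y)` makes truthful reporting of the source's value strictly optimal in
expectation for every true value `x`, every feasible distribution `D' ∈ L x`, and
every deviating report `x' ≠ x`. -/
theorem no_strictly_truthful_mechanism_of_not_identifiable
    (Y : Type) [Fintype Y] [Nonempty Y]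
    (n : ℕ) (hn : 1 ≤ n)
    (X : Type)
    (L : X → Set (PMF (Fin n → Y)))
    (hni : ∃ x₁ x₂ : X, x₁ ≠ x₂ ∧ (L x₁ ∩ L x₂).Nonempty) :
    ¬ ∃ u : X → PMF (Fin n → Y) → (Fin n → Y) → ℝ,
        ∀ x : X, ∀ D' ∈ L x, ∀ x' : X, x' ≠ x →
          ∑ y : Fin n → Y, (D' y).toReal * u x' D' y
            < ∑ y : Fin n → Y, (D' y).toReal * u x D' y :=
  no_strictly_truthful_mechanism_of_not_identifiable_general Y n X L hni
end

section
/- Fix n ≥ 1 and positive reals p_1, …, p_n (throttling caps). For each x > 0, let L_x be the set of product probability mass functions D_1 × ⋯ × D_n on (ℝ≥0)^n such that for every i the support of D_i is contained in the interval [0, min(p_i, x)] (this set is contained in the bandwidth model specification, in which each D_i must have support contained in [0, x]). Then the source is not identifiable: for any two reals x_1 ≠ x_2 with x_1 > max_i p_i and x_2 > max_i p_i, every product D_1 × ⋯ × D_n of probability mass functions with support(D_i) ⊆ [0, p_i] for all i belongs to L_{x_1} ∩ L_{x_2}; in particular, L_{x_1} ∩ L_{x_2} ≠ ∅. -/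
/-!
Once the true bandwidth `x` exceeds every cap `p i`, the effective bound `min (p i) x` is just
`p i`, so `L x` no longer depends on `x`. It is nonempty: the point mass at bandwidth `0` fits
under every cap.
-/

theorem PMF.support_pure_zero_subset_Icc {a : ℝ} (ha : 0 ≤ a) :
    (PMF.pure (0 : NNReal)).support ⊆ {r : NNReal | (r : ℝ) ∈ Set.Icc 0 a} := by
  rw [PMF.support_pure, Set.singleton_subset_iff]
  exact ⟨le_rfl, ha⟩

theorem bandwidth_source_not_identifiable_general
    (n : ℕ)
    (p : Fin n → ℝ) (hp : ∀ i, 0 < p i)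
    (L : ℝ → Set (Fin n → PMF NNReal))
    (hL : ∀ x, L x = { D : Fin n → PMF NNReal |
      ∀ i, (D i).support ⊆ { r : NNReal | (r : ℝ) ∈ Set.Icc 0 (min (p i) x) } })
    (x₁ x₂ : ℝ)
    (h₁ : ∀ i, p i < x₁) (h₂ : ∀ i, p i < x₂) :
    (∀ D : Fin n → PMF NNReal,
        (∀ i, (D i).support ⊆ { r : NNReal | (r : ℝ) ∈ Set.Icc 0 (p i) }) →
        D ∈ L x₁ ∩ L x₂) ∧
      (L x₁ ∩ L x₂).Nonempty := by
  have mem_L : ∀ x, (∀ i, p i < x) → ∀ D : Fin n → PMF NNReal,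
      (∀ i, (D i).support ⊆ { r : NNReal | (r : ℝ) ∈ Set.Icc 0 (p i) }) → D ∈ L x := by
    intro x hx D hD
    rw [hL]
    intro i
    rw [min_eq_left (hx i).le]
    exact hD i
  have mem_inter : ∀ D : Fin n → PMF NNReal,
      (∀ i, (D i).support ⊆ { r : NNReal | (r : ℝ) ∈ Set.Icc 0 (p i) }) →
      D ∈ L x₁ ∩ L x₂ :=
    fun D hD => ⟨mem_L x₁ h₁ D hD, mem_L x₂ h₂ D hD⟩
  exact ⟨mem_inter, fun _ => PMF.pure 0,
    mem_inter _ fun i => PMF.support_pure_zero_subset_Icc (hp i).le⟩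

/-- In the bandwidth signal network model with throttling caps `p i`, the source is not
identifiable: for any `x₁ ≠ x₂` both exceeding every cap `p i`, every tuple of observer
distributions (identified with the product distribution) whose `i`-th marginal has support
contained in `[0, p i]` belongs to `L x₁ ∩ L x₂`; in particular `L x₁ ∩ L x₂ ≠ ∅`. -/
theorem bandwidth_source_not_identifiable
    (n : ℕ) (hn : 1 ≤ n)
    (p : Fin n → ℝ) (hp : ∀ i, 0 < p i)
    (L : ℝ → Set (Fin n → PMF NNReal))
    (hL : ∀ x, L x = { D : Fin n → PMF NNReal |
      ∀ i, (D i).support ⊆ { r : NNReal | (r : ℝ) ∈ Set.Icc 0 (min (p i) x) } })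
    (x₁ x₂ : ℝ) (hne : x₁ ≠ x₂)
    (h₁ : ∀ i, p i < x₁) (h₂ : ∀ i, p i < x₂) :
    (∀ D : Fin n → PMF NNReal,
        (∀ i, (D i).support ⊆ { r : NNReal | (r : ℝ) ∈ Set.Icc 0 (p i) }) →
        D ∈ L x₁ ∩ L x₂) ∧
      (L x₁ ∩ L x₂).Nonempty :=
  bandwidth_source_not_identifiable_general n p hp L hL x₁ x₂ h₁ h₂
end
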